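/- Let m ∈ ℕ, θ₁, θ₂ ∈ ℝ and σ₁², σ₂² > 0, and let γ_j = N(θ_j, σ_j²) be the Gaussian probability measure on ℝ. Then for all t₁, t₂ ∈ ℝ, the moment generating function of the continuation-ratio product-of-LNB kernel satisfies ∑_{R=0}^{m} ∑_{y=0}^{m−R} e^{t₁R + t₂y} · ( ∫ Bin(R; m, φ(ψ₁)) dγ₁(ψ₁) ) · ( ∫ Bin(y; m−R, φ(ψ₂)) dγ₂(ψ₂) ) = ∫∫ ( φ(ψ₁)·e^{t₁} + (1−φ(ψ₁))·( φ(ψ₂)·e^{t₂} + 1 − φ(ψ₂) ) )^m dγ₁(ψ₁) dγ₂(ψ₂). -/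
import Mathlib


open Finset Real MeasureTheory ProbabilityTheory

/-- The standard logistic function `φ(u) = exp(u)/(1+exp(u))`. -/
noncomputable def logistic (u : ℝ) : ℝ := Real.exp u / (1 + Real.exp u)

/-- The binomial probability mass function: `Bin(y; m, p) = C(m,y) p^y (1-p)^(m-y)`. -/
noncomputable def binPMF (m y : ℕ) (p : ℝ) : ℝ :=
  (m.choose y : ℝ) * p ^ y * (1 - p) ^ (m - y)

lemma continuous_logistic : Continuous logistic := by
  unfold logistic
  exact Real.continuous_exp.div (by continuity) (fun u => by positivity)

lemma logistic_nonneg (u : ℝ) : 0 ≤ logistic u := by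
  unfold logistic; positivity

lemma logistic_le_one (u : ℝ) : logistic u ≤ 1 := by
  unfold logistic
  rw [div_le_one (by positivity)]
  linarith

lemma binPMF_logistic_nonneg (m y : ℕ) (ψ : ℝ) : 0 ≤ binPMF m y (logistic ψ) := by
  unfold binPMF
  have h0 := logistic_nonneg ψ
  have h1 := logistic_le_one ψ
  have : (0:ℝ) ≤ 1 - logistic ψ := by linarith
  positivity

lemma binPMF_logistic_le (m y : ℕ) (ψ : ℝ) :
    binPMF m y (logistic ψ) ≤ (m.choose y : ℝ) := by
  unfold binPMF
  have h0 := logistic_nonneg ψ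
  have h1 := logistic_le_one ψ
  have h0' : (0:ℝ) ≤ 1 - logistic ψ := by linarith
  have h1' : 1 - logistic ψ ≤ 1 := by linarith
  calc (m.choose y : ℝ) * logistic ψ ^ y * (1 - logistic ψ) ^ (m - y)
      ≤ (m.choose y : ℝ) * 1 * 1 := by
        apply mul_le_mul
        · apply mul_le_mul le_rfl (pow_le_one₀ h0 h1) (by positivity) (by positivity)
        · exact pow_le_one₀ h0' h1'
        · positivity
        · positivity
    _ = (m.choose y : ℝ) := by ring

lemma binPMF_logistic_integrable (m y : ℕ) (μ : Measure ℝ) [IsProbabilityMeasure μ] :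
    Integrable (fun ψ => binPMF m y (logistic ψ)) μ := by
  have hc : Continuous fun ψ => binPMF m y (logistic ψ) := by
    unfold binPMF
    exact ((continuous_const.mul (continuous_logistic.pow y)).mul
      ((continuous_const.sub continuous_logistic).pow (m - y)))
  apply Integrable.mono' (integrable_const ((m.choose y : ℝ)))
  · exact hc.aestronglyMeasurable
  · filter_upwards with ψ
    rw [Real.norm_eq_abs, abs_of_nonneg (binPMF_logistic_nonneg m y ψ)]
    exact binPMF_logistic_le m y ψ

lemma expand_pow (m : ℕ) (t₁ t₂ a b : ℝ) :
    (a * Real.exp t₁ + (1 - a) * (b * Real.exp t₂ + 1 - b)) ^ m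
      = ∑ R ∈ Finset.range (m + 1), ∑ y ∈ Finset.range (m - R + 1),
          Real.exp (t₁ * R + t₂ * y) * binPMF m R a * binPMF (m - R) y b := by
  rw [add_pow]
  refine Finset.sum_congr rfl fun R hR => ?_
  have hX : ((1 - a) * (b * Real.exp t₂ + 1 - b)) ^ (m - R)
      = ∑ y ∈ Finset.range (m - R + 1),
          (1 - a) ^ (m - R) * ((b * Real.exp t₂) ^ y * (1 - b) ^ (m - R - y) *
            ((m - R).choose y : ℝ)) := by
    have hb : (1 - a) * (b * Real.exp t₂ + 1 - b)
        = (1 - a) * ((b * Real.exp t₂) + (1 - b)) := by ring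
    rw [hb, mul_pow, add_pow, Finset.mul_sum]
  rw [hX, Finset.mul_sum, Finset.sum_mul]
  refine Finset.sum_congr rfl fun y hy => ?_
  rw [Real.exp_add, mul_comm t₁ (R : ℝ), mul_comm t₂ (y : ℝ), Real.exp_nat_mul,
    Real.exp_nat_mul]
  unfold binPMF
  ring

/-- The MGF of the continuation-ratio product-of-LNB kernel equals the double Gaussian
integral of the binomial MGF closed form. -/
theorem mgf_continuation_ratio_LNB (m : ℕ) (θ₁ θ₂ : ℝ) (v₁ v₂ : NNReal)
    (h₁ : 0 < v₁) (h₂ : 0 < v₂) (t₁ t₂ : ℝ) :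
    ∑ R ∈ Finset.range (m + 1), ∑ y ∈ Finset.range (m - R + 1),
        Real.exp (t₁ * R + t₂ * y) *
          (∫ ψ₁, binPMF m R (logistic ψ₁) ∂(gaussianReal θ₁ v₁)) *
          (∫ ψ₂, binPMF (m - R) y (logistic ψ₂) ∂(gaussianReal θ₂ v₂))
      = ∫ ψ₁, ∫ ψ₂,
          (logistic ψ₁ * Real.exp t₁ +
            (1 - logistic ψ₁) * (logistic ψ₂ * Real.exp t₂ + 1 - logistic ψ₂)) ^ m
          ∂(gaussianReal θ₂ v₂) ∂(gaussianReal θ₁ v₁) := by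
  set γ₁ := gaussianReal θ₁ v₁
  set γ₂ := gaussianReal θ₂ v₂
  have inner_eq : ∀ ψ₁ : ℝ,
      (∫ ψ₂, (logistic ψ₁ * Real.exp t₁ +
          (1 - logistic ψ₁) * (logistic ψ₂ * Real.exp t₂ + 1 - logistic ψ₂)) ^ m ∂γ₂)
        = ∑ R ∈ Finset.range (m + 1), ∑ y ∈ Finset.range (m - R + 1),
            Real.exp (t₁ * R + t₂ * y) * binPMF m R (logistic ψ₁) *
              (∫ ψ₂, binPMF (m - R) y (logistic ψ₂) ∂γ₂) := by
    intro ψ₁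
    have hpt : (fun ψ₂ => (logistic ψ₁ * Real.exp t₁ +
        (1 - logistic ψ₁) * (logistic ψ₂ * Real.exp t₂ + 1 - logistic ψ₂)) ^ m)
        = fun ψ₂ => ∑ R ∈ Finset.range (m + 1), ∑ y ∈ Finset.range (m - R + 1),
            (Real.exp (t₁ * R + t₂ * y) * binPMF m R (logistic ψ₁)) *
              binPMF (m - R) y (logistic ψ₂) := by
      funext ψ₂
      rw [expand_pow m t₁ t₂ (logistic ψ₁) (logistic ψ₂)]
    rw [hpt]
    rw [integral_finset_sum]
    · refine Finset.sum_congr rfl fun R hR => ?_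
      rw [integral_finset_sum]
      · refine Finset.sum_congr rfl fun y hy => ?_
        rw [integral_const_mul]
      · intro y hy
        exact (binPMF_logistic_integrable (m - R) y γ₂).const_mul _
    · intro R hR
      apply integrable_finset_sum
      intro y hy
      exact (binPMF_logistic_integrable (m - R) y γ₂).const_mul _
  have hfun : (fun ψ₁ => ∫ ψ₂, (logistic ψ₁ * Real.exp t₁ +
      (1 - logistic ψ₁) * (logistic ψ₂ * Real.exp t₂ + 1 - logistic ψ₂)) ^ m ∂γ₂)
      = fun ψ₁ => ∑ R ∈ Finset.range (m + 1), ∑ y ∈ Finset.range (m - R + 1),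
          Real.exp (t₁ * R + t₂ * y) * binPMF m R (logistic ψ₁) *
            (∫ ψ₂, binPMF (m - R) y (logistic ψ₂) ∂γ₂) := funext inner_eq
  rw [hfun]
  rw [integral_finset_sum]
  · refine Finset.sum_congr rfl fun R hR => ?_
    rw [integral_finset_sum]
    · refine Finset.sum_congr rfl fun y hy => ?_
      have : (fun ψ₁ => Real.exp (t₁ * R + t₂ * y) * binPMF m R (logistic ψ₁) *
          (∫ ψ₂, binPMF (m - R) y (logistic ψ₂) ∂γ₂))
          = fun ψ₁ => (Real.exp (t₁ * R + t₂ * y) *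
            (∫ ψ₂, binPMF (m - R) y (logistic ψ₂) ∂γ₂)) * binPMF m R (logistic ψ₁) := by
        funext ψ₁; ring
      rw [this, integral_const_mul]
      ring
    · intro y hy
      exact ((binPMF_logistic_integrable m R γ₁).const_mul _).mul_const _
  · intro R hR
    apply integrable_finset_sum
    intro y hy
    exact ((binPMF_logistic_integrable m R γ₁).const_mul _).mul_const _
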